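/- arXiv:2109.00769 — 2 statements merged into one kernel-verified Lean document; each statement's English description precedes it below -/
import Mathlib

section
/- Let k ≥ 1 and let a₁ ≤ a₂ ≤ ⋯ ≤ a_{k+1} be nonnegative integers with a₁ + ⋯ + a_{k+1} = |Z| − k(k+1)/2 for some integer |Z|. Fix i ∈ {1,…,k+1}. If (a_i + 1)(k+1) ≤ a₁ + ⋯ + a_{k+1}, then binom(a_i+k+2, 2) − |Z| − binom(a_i+1, 2) ≤ 0. -/
open Finset

lemma choose_two_int (n : ℕ) : ((n.choose 2 : ℤ)) * 2 = n * (n - 1) := by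
  induction n with
  | zero => simp
  | succ m ih =>
    rw [Nat.choose_succ_succ, Nat.choose_one_right]
    push_cast
    push_cast at ih
    ring_nf
    ring_nf at ih
    linarith

/-- Numerical unexpectedness criterion: if `a₁ ≤ ⋯ ≤ a_{k+1}` are nonnegative integers with
`∑ aⱼ = |Z| − k(k+1)/2` and `(a_i + 1)(k+1) ≤ ∑ aⱼ`, then
`binom(a_i+k+2,2) − |Z| − binom(a_i+1,2) ≤ 0`. -/
theorem stmt_3 (k : ℕ) (hk : 1 ≤ k) (a : Fin (k + 1) → ℕ) (hmono : Monotone a)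
    (Z : ℤ) (hsum : (∑ j, (a j : ℤ)) = Z - (k * (k + 1) / 2 : ℕ))
    (i : Fin (k + 1))
    (hineq : ((a i : ℤ) + 1) * (k + 1) ≤ ∑ j, (a j : ℤ)) :
    ((a i + k + 2).choose 2 : ℤ) - Z - ((a i + 1).choose 2 : ℤ) ≤ 0 := by
  set S : ℤ := ∑ j, (a j : ℤ) with hS
  have hT : ((k * (k + 1) / 2 : ℕ) : ℤ) * 2 = (k : ℤ) * (k + 1) := by
    have : (k * (k + 1) / 2 : ℕ) = (k + 1).choose 2 := by
      rw [Nat.choose_two_right, Nat.add_sub_cancel, Nat.mul_comm]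
    rw [this]
    have := choose_two_int (k + 1)
    push_cast at this ⊢
    linarith
  have h1 := choose_two_int (a i + k + 2)
  have h2 := choose_two_int (a i + 1)
  push_cast at h1 h2
  nlinarith [hsum, hineq]
end

section
/- Let f ∈ ℂ[a,b,c], k ≥ 1, and suppose (g_{i₁,i₂,i₃})_{i₁+i₂+i₃=k} is a syzygy of the k-th power of the Jacobian ideal: ∑ g_{i₁,i₂,i₃}·f_a^{i₁}·f_b^{i₂}·f_c^{i₃} = 0. Suppose f = ℓ·h with ℓ = λa + μb + νc, and Q satisfies ℓ(Q) = 0, h(Q) ≠ 0. Then ∑ g_{i₁,i₂,i₃}(Q)·λ^{i₁}·μ^{i₂}·ν^{i₃} = 0. -/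
open MvPolynomial Finset

/-- If `(g_t)_{t₀+t₁+t₂=k}` is a syzygy of the `k`-th power of the Jacobian ideal of `f`,
`f = ℓ·h` with `ℓ = λa + μb + νc`, and `Q` satisfies `ℓ(Q) = 0`, `h(Q) ≠ 0`, then
`∑ g_t(Q) λ^{t₀} μ^{t₁} ν^{t₂} = 0`, i.e. the dual point of `ℓ` lies on the degree-`k`
curve `S_Q`. -/
theorem stmt_18 (f : MvPolynomial (Fin 3) ℂ) (k : ℕ) (hk : 1 ≤ k)
    (g : (Fin 3 → ℕ) → MvPolynomial (Fin 3) ℂ)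
    (hsyz : ∑ t ∈ Finset.Nat.antidiagonalTuple 3 k,
      g t * (pderiv (0 : Fin 3) f) ^ t 0 * (pderiv (1 : Fin 3) f) ^ t 1
        * (pderiv (2 : Fin 3) f) ^ t 2 = 0)
    (lam mu nu : ℂ) (l h : MvPolynomial (Fin 3) ℂ)
    (hl : l = C lam * X 0 + C mu * X 1 + C nu * X 2)
    (hfl : f = l * h)
    (Q : Fin 3 → ℂ) (hQl : eval Q l = 0) (hQh : eval Q h ≠ 0) :
    ∑ t ∈ Finset.Nat.antidiagonalTuple 3 k,
      eval Q (g t) * lam ^ t 0 * mu ^ t 1 * nu ^ t 2 = 0 := by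
  set H := eval Q h with hH
  have hd : ∀ i : Fin 3, eval Q (pderiv i f) = eval Q (pderiv i l) * H := by
    intro i
    rw [hfl, pderiv_mul]
    simp [hQl, hH]
  have hdl : eval Q (pderiv (0 : Fin 3) l) = lam ∧ eval Q (pderiv (1 : Fin 3) l) = mu ∧
      eval Q (pderiv (2 : Fin 3) l) = nu := by
    subst hl
    refine ⟨?_, ?_, ?_⟩ <;> simp [pderiv_X, Pi.single_apply]
  have key : ∀ t ∈ Finset.Nat.antidiagonalTuple 3 k,
      eval Q (g t * (pderiv (0 : Fin 3) f) ^ t 0 * (pderiv (1 : Fin 3) f) ^ t 1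
        * (pderiv (2 : Fin 3) f) ^ t 2)
      = (eval Q (g t) * lam ^ t 0 * mu ^ t 1 * nu ^ t 2) * H ^ k := by
    intro t ht
    have hsum : t 0 + t 1 + t 2 = k := by
      have := (Finset.Nat.mem_antidiagonalTuple).mp ht
      simpa [Fin.sum_univ_three] using this
    simp only [map_mul, map_pow, hd, hdl.1, hdl.2.1, hdl.2.2]
    rw [← hsum]
    ring
  have h0 : (∑ t ∈ Finset.Nat.antidiagonalTuple 3 k,
      eval Q (g t) * lam ^ t 0 * mu ^ t 1 * nu ^ t 2) * H ^ k = 0 := by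
    rw [Finset.sum_mul]
    calc _ = eval Q (∑ t ∈ Finset.Nat.antidiagonalTuple 3 k,
        g t * (pderiv (0 : Fin 3) f) ^ t 0 * (pderiv (1 : Fin 3) f) ^ t 1
          * (pderiv (2 : Fin 3) f) ^ t 2) := by
          rw [map_sum]
          exact (Finset.sum_congr rfl key).symm
      _ = 0 := by rw [hsyz]; simp
  exact (mul_eq_zero.mp h0).resolve_right (pow_ne_zero _ hQh)
end
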